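/- arXiv:2206.03468 — 2 statements merged into one kernel-verified Lean document; each statement's English description precedes it below -/
import Mathlib

section
/- Let N > 0 be real, let k be a positive integer, and let D̃ be a real number with 0 < D̃ < 1. Set η = ⌈(D̃/(1 − D̃))·k⌉. Consider the linear program: minimize λ_0·N/k + λ_η·N/(k + η) over real λ_0, λ_η subject to λ_0·0/k + λ_η·η/(k + η) ≤ D̃, λ_0 + λ_η = 1, and λ_0, λ_η ≥ 0. Then the value (N/k)·(1 − D̃) is the minimum of this program: it is attained by λ_0 = 1 − (D̃/η)(k + η), λ_η = (D̃/η)(k + η), and every feasible (λ_0, λ_η) yields objective value at least (N/k)·(1 − D̃). -/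
/-! On the simplex `λ_0 + λ_η = 1` the per-phase cost equals `(N/k)·(1 - distortion)`, because
section `η` costs `N/(k+η) = (N/k)·(1 - η/(k+η))`. Minimising the cost is therefore the same as
using up the distortion budget, and the bound `cost ≥ (N/k)(1 - D̃)` is immediate. The budget can
be used up exactly by taking `λ_η = D̃(k+η)/η`; the ceiling in `η` makes `η ≥ D̃k/(1-D̃)`, which is
exactly what keeps `λ_η ≤ 1`. -/

section TwoSection

variable {k η : ℝ}

theorem two_section_cost_eq (N : ℝ) {l0 lEta : ℝ} (hk : k ≠ 0) (hkη : k + η ≠ 0)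
    (hsum : l0 + lEta = 1) :
    l0 * (N / k) + lEta * (N / (k + η)) = N / k * (1 - (l0 * (0 / k) + lEta * (η / (k + η)))) := by
  rw [← hsum]
  field_simp
  ring

theorem two_section_distortion_eq (D : ℝ) (hη : η ≠ 0) (hkη : k + η ≠ 0) :
    D / η * (k + η) * (η / (k + η)) = D := by
  field_simp

theorem mul_add_le_of_div_one_sub_mul_le {D : ℝ} (hD1 : D < 1) (h : D / (1 - D) * k ≤ η) :
    D * (k + η) ≤ η := by
  rw [div_mul_eq_mul_div, div_le_iff₀ (sub_pos.mpr hD1)] at h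
  linarith

end TwoSection

/-- For real `N > 0`, a positive integer `k` and a distortion budget `0 < D̃ < 1`,
with `η = ⌈(D̃/(1-D̃))·k⌉`, the value `(N/k)·(1-D̃)` is the minimum of the linear
program minimizing `λ_0·N/k + λ_η·N/(k+η)` subject to
`λ_0·0/k + λ_η·η/(k+η) ≤ D̃`, `λ_0 + λ_η = 1`, `λ_0, λ_η ≥ 0`:
it is attained at `λ_0 = 1 - (D̃/η)(k+η)`, `λ_η = (D̃/η)(k+η)`, and every feasible
point has objective value at least `(N/k)·(1-D̃)`. -/
theorem pruw_two_section_lp_minimum (N : ℝ) (hN : 0 < N) (k : ℕ) (hk : 0 < k)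
    (D : ℝ) (hD0 : 0 < D) (hD1 : D < 1) :
    let η : ℤ := ⌈D / (1 - D) * (k : ℝ)⌉
    let lam0 : ℝ := 1 - D / (η : ℝ) * ((k : ℝ) + (η : ℝ))
    let lamEta : ℝ := D / (η : ℝ) * ((k : ℝ) + (η : ℝ))
    (lam0 * (0 / (k : ℝ)) + lamEta * ((η : ℝ) / ((k : ℝ) + (η : ℝ))) ≤ D ∧
      lam0 + lamEta = 1 ∧ 0 ≤ lam0 ∧ 0 ≤ lamEta ∧
      lam0 * (N / (k : ℝ)) + lamEta * (N / ((k : ℝ) + (η : ℝ)))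
        = N / (k : ℝ) * (1 - D)) ∧
    ∀ l0 lEta : ℝ,
      l0 * (0 / (k : ℝ)) + lEta * ((η : ℝ) / ((k : ℝ) + (η : ℝ))) ≤ D →
      l0 + lEta = 1 → 0 ≤ l0 → 0 ≤ lEta →
      N / (k : ℝ) * (1 - D) ≤ l0 * (N / (k : ℝ)) + lEta * (N / ((k : ℝ) + (η : ℝ))) := by
  intro η lam0 lamEta
  have hk : (0 : ℝ) < k := by exact_mod_cast hk
  have hη : (0 : ℝ) < η := by
    have : (0 : ℤ) < η := Int.ceil_pos.mpr (by have := sub_pos.mpr hD1; positivity)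
    exact_mod_cast this
  have hkη : (0 : ℝ) < k + η := by linarith
  have hsum : lam0 + lamEta = 1 := sub_add_cancel _ _
  have hdist : lam0 * (0 / (k : ℝ)) + lamEta * ((η : ℝ) / ((k : ℝ) + (η : ℝ))) = D := by
    rw [zero_div, mul_zero, zero_add, two_section_distortion_eq D hη.ne' hkη.ne']
  have hbudget : D * (k + η) ≤ η := mul_add_le_of_div_one_sub_mul_le hD1 (Int.le_ceil _)
  refine ⟨⟨hdist.le, hsum, ?_, by positivity, ?_⟩, ?_⟩
  · rw [sub_nonneg, div_mul_eq_mul_div, div_le_one hη]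
    exact hbudget
  · rw [two_section_cost_eq N hk.ne' hkη.ne' hsum, hdist]
  · intro l0 lEta hc hs _ _
    rw [two_section_cost_eq N hk.ne' hkη.ne' hs]
    gcongr
end

section
/- Let F be a field, let N be a natural number with N ≥ 3, and let k = ⌊N/2⌋ − 1. Let α_1, …, α_N ∈ F be pairwise distinct, let f_1, …, f_k ∈ F be pairwise distinct, and suppose f_i ≠ α_n for all i, n. Let c_1, …, c_k, c'_1, …, c'_k ∈ F and let P, P' ∈ F[x] be polynomials of degree at most ⌊N/2⌋. If Σ_{i=1}^{k} c_i/(f_i − α_n) + P(α_n) = Σ_{i=1}^{k} c'_i/(f_i − α_n) + P'(α_n) for every n ∈ {1, …, N}, then c_i = c'_i for all i and P = P'. (Consequently, in the reading phase of the PRUW scheme, the ⌊N/2⌋ − 1 desired parameters of each subpacket are correctly decodable from the N answers.) -/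
/-!
Put `d = c' - c` and `D = P - P'`, so that `Σ d_i / (x - f_i) + D(x)` vanishes at every `α_n`.
Clearing the denominators `∏_j (x - f_j)` turns this rational function into a polynomial of
degree at most `deg D + k ≤ 2⌊N/2⌋ - 1 < N` with the `N` roots `α_n`, hence into `0`.
At `x = f_i` only the `i`-th term of the cleared sum survives, namely `d_i ∏_{j ≠ i} (f_i - f_j)`,
so `d_i = 0`; what is left is `D ∏_j (X - f_j) = 0`, so `D = 0`.
-/

open Polynomial Finset Lagrange

section PartialFraction

variable {F ι : Type*} [Field F] [Fintype ι] [DecidableEq ι]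

/-- The numerator of `Σ i, d i / (X - f i) + D` over the common denominator `nodal univ f`. -/
noncomputable def partialFractionNumerator (f d : ι → F) (D : F[X]) : F[X] :=
  ∑ i, C (d i) * nodal (univ.erase i) f + D * nodal univ f

theorem eval_partialFractionNumerator {f : ι → F} (d : ι → F) (D : F[X]) {x : F}
    (hx : ∀ i, x ≠ f i) :
    (partialFractionNumerator f d D).eval x
      = (∑ i, d i / (x - f i) + D.eval x) * (nodal univ f).eval x := by
  simp only [partialFractionNumerator, eval_add, eval_mul, eval_finsetSum, eval_C, add_mul,
    sum_mul]
  congr 1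
  refine sum_congr rfl fun i hi => ?_
  have hxi : x - f i ≠ 0 := sub_ne_zero_of_ne (hx i)
  rw [eval_nodal, eval_nodal, ← mul_prod_erase _ _ hi]
  field_simp

theorem eval_partialFractionNumerator_node (f d : ι → F) (D : F[X]) (i : ι) :
    (partialFractionNumerator f d D).eval (f i) = d i * (nodal (univ.erase i) f).eval (f i) := by
  simp only [partialFractionNumerator, eval_add, eval_mul, eval_finsetSum, eval_C,
    eval_nodal_at_node (mem_univ i), mul_zero, add_zero]
  refine sum_eq_single i (fun j _ hji => ?_) (fun hi => absurd (mem_univ i) hi)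
  rw [eval_nodal_at_node (mem_erase.2 ⟨Ne.symm hji, mem_univ i⟩), mul_zero]

theorem natDegree_partialFractionNumerator_le (f d : ι → F) (D : F[X]) :
    (partialFractionNumerator f d D).natDegree ≤ D.natDegree + Fintype.card ι := by
  refine natDegree_add_le_of_degree_le (natDegree_sum_le_of_forall_le _ _ fun i _ => ?_) ?_
  · refine natDegree_C_mul_le _ _ |>.trans ?_
    rw [natDegree_nodal, card_erase_of_mem (mem_univ i), card_univ]
    omega
  · refine natDegree_mul_le.trans ?_
    rw [natDegree_nodal, card_univ]

theorem eq_zero_of_partialFraction_eval_eq_zero {κ : Type*} [Fintype κ] {f : ι → F}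
    (hf : Function.Injective f) {α : κ → F} (hα : Function.Injective α)
    (hfα : ∀ i n, f i ≠ α n) {d : ι → F} {D : F[X]}
    (hdeg : D.natDegree + Fintype.card ι < Fintype.card κ)
    (hvanish : ∀ n, ∑ i, d i / (α n - f i) + D.eval (α n) = 0) :
    d = 0 ∧ D = 0 := by
  have hnum : partialFractionNumerator f d D = 0 := by
    refine eq_zero_of_natDegree_lt_card_of_eval_eq_zero _ hα (fun n => ?_)
      ((natDegree_partialFractionNumerator_le f d D).trans_lt hdeg)
    rw [eval_partialFractionNumerator d D fun i => (hfα i n).symm, hvanish n, zero_mul]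
  have hd : d = 0 := funext fun i => by
    have hnode := eval_partialFractionNumerator_node f d D i
    rw [hnum, eval_zero, eq_comm] at hnode
    refine (mul_eq_zero.1 hnode).resolve_right (eval_nodal_not_at_node fun j hj => ?_)
    exact fun hij => (mem_erase.1 hj).1 (hf hij).symm
  subst hd
  have hD : D * nodal univ f = 0 := by
    simpa [partialFractionNumerator] using hnum
  exact ⟨rfl, (mul_eq_zero.1 hD).resolve_right nodal_ne_zero⟩

end PartialFraction

/-- Decodability in the reading phase of the PRUW scheme: with `N ≥ 3` databases,
`k = ⌊N/2⌋ - 1`, pairwise distinct evaluation points `α_n`, pairwise distinct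
constants `f_i` (all distinct from every `α_n`), parameters `c_i, c'_i` and noise
polynomials `P, P'` of degree at most `⌊N/2⌋`: if the `N` answers agree, i.e.,
`Σ_i c_i/(f_i - α_n) + P(α_n) = Σ_i c'_i/(f_i - α_n) + P'(α_n)` for all `n`,
then `c = c'` and `P = P'`. -/
theorem pruw_reading_phase_decodable {F : Type*} [Field F]
    (N : ℕ) (hN : 3 ≤ N)
    (α : Fin N → F) (hα : Function.Injective α)
    (f : Fin (N / 2 - 1) → F) (hf : Function.Injective f)
    (hfα : ∀ i n, f i ≠ α n)
    (c c' : Fin (N / 2 - 1) → F) (P P' : F[X])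
    (hP : P.degree ≤ (N / 2 : ℕ)) (hP' : P'.degree ≤ (N / 2 : ℕ))
    (hans : ∀ n : Fin N,
      ∑ i, c i / (f i - α n) + P.eval (α n)
        = ∑ i, c' i / (f i - α n) + P'.eval (α n)) :
    c = c' ∧ P = P' := by
  have hdeg : (P - P').natDegree + Fintype.card (Fin (N / 2 - 1)) < Fintype.card (Fin N) := by
    have := natDegree_sub_le P P'
    have := natDegree_le_of_degree_le hP
    have := natDegree_le_of_degree_le hP'
    simp only [Fintype.card_fin]
    omega
  have hvanish : ∀ n, ∑ i, (c' - c) i / (α n - f i) + (P - P').eval (α n) = 0 := fun n => by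
    have hflip : ∀ i, (c' - c) i / (α n - f i) = c i / (f i - α n) - c' i / (f i - α n) := by
      intro i
      rw [← neg_sub (f i), Pi.sub_apply, div_neg, ← neg_div, neg_sub, sub_div]
    simp only [hflip, sum_sub_distrib, eval_sub]
    linear_combination hans n
  obtain ⟨hc, hP⟩ := eq_zero_of_partialFraction_eval_eq_zero hf hα hfα hdeg hvanish
  exact ⟨(sub_eq_zero.1 hc).symm, sub_eq_zero.1 hP⟩
end
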